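/- arXiv:2602.04795 — 5 statements merged into one kernel-verified Lean document; each statement's English description precedes it below -/
import Mathlib

section
/- Let Q be an r×r real matrix such that every row satisfies Q(i,:) e ≥ ‖Q(i,:)‖₂ and e^T Q e = r. Then |det(Q)| ≤ 1. -/
/-!
By Hadamard's inequality `|det Q|` is at most the product of the Euclidean norms of the rows of
`Q`, which by the row conditions is at most the product of the row sums. These row sums are
nonnegative and add up to `r`, so by AM–GM their product is at most `1`.

Hadamard's inequality itself reduces, after scaling the rows, to a matrix `A` with unit rows. Its
Gram matrix `A Aᵀ` is positive semidefinite with unit diagonal, hence has nonnegative eigenvalues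
summing to the dimension, and AM–GM on them gives `det A ^ 2 = det (A Aᵀ) ≤ 1`.
-/

open Matrix

theorem Real.prod_le_one_of_sum_le_card {ι : Type*} [Fintype ι] {z : ι → ℝ}
    (hz : ∀ i, 0 ≤ z i) (hsum : ∑ i, z i ≤ Fintype.card ι) : ∏ i, z i ≤ 1 :=
  calc ∏ i, z i ≤ ∏ i, Real.exp (z i - 1) :=
        Finset.prod_le_prod (fun i _ => hz i)
          (fun i _ => by linarith [Real.add_one_le_exp (z i - 1)])
    _ = Real.exp (∑ i, z i - Fintype.card ι) := by
        rw [← Real.exp_sum, Finset.sum_sub_distrib]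
        simp
    _ ≤ 1 := Real.exp_le_one_iff.mpr (by linarith)

namespace Matrix

variable {n : Type*} [Fintype n] [DecidableEq n]

theorem PosSemidef.det_le_one_of_trace_le_card {A : Matrix n n ℝ} (hA : A.PosSemidef)
    (htr : A.trace ≤ Fintype.card n) : A.det ≤ 1 := by
  rw [hA.isHermitian.det_eq_prod_eigenvalues]
  rw [hA.isHermitian.trace_eq_sum_eigenvalues] at htr
  exact Real.prod_le_one_of_sum_le_card hA.eigenvalues_nonneg htr

theorem abs_det_le_one_of_sum_sq_row_eq_one {A : Matrix n n ℝ}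
    (hrow : ∀ i, ∑ j, A i j ^ 2 = 1) : |A.det| ≤ 1 := by
  have hgram : (A * Aᴴ).PosSemidef := posSemidef_self_mul_conjTranspose A
  have htrace : (A * Aᴴ).trace = Fintype.card n := by
    simp [trace, mul_apply, ← sq, hrow]
  have hdet : (A * Aᴴ).det = A.det ^ 2 := by
    simp [det_mul, sq]
  rw [← sq_le_one_iff_abs_le_one, ← hdet]
  exact hgram.det_le_one_of_trace_le_card htrace.le

theorem abs_det_le_prod_sqrt_sum_sq_row (A : Matrix n n ℝ) :
    |A.det| ≤ ∏ i, √(∑ j, A i j ^ 2) := by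
  set ρ : n → ℝ := fun i => √(∑ j, A i j ^ 2)
  have hsq_nonneg : ∀ i, 0 ≤ ∑ j, A i j ^ 2 := fun i => Finset.sum_nonneg fun j _ => sq_nonneg _
  by_cases hzero : ∃ i, ρ i = 0
  · obtain ⟨i, hi⟩ := hzero
    have hsum : ∑ j, A i j ^ 2 = 0 := (Real.sqrt_eq_zero (hsq_nonneg i)).mp hi
    have hrow : ∀ j, A i j = 0 := fun j => pow_eq_zero_iff two_ne_zero |>.mp <|
      (Finset.sum_eq_zero_iff_of_nonneg fun j _ => sq_nonneg _).mp hsum j (Finset.mem_univ j)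
    rw [det_eq_zero_of_row_eq_zero i hrow, Finset.prod_eq_zero (Finset.mem_univ i) hi, abs_zero]
  push Not at hzero
  set B : Matrix n n ℝ := of fun i j => A i j / ρ i
  have hfactor : A = diagonal ρ * B := by
    ext i j
    simp [B, diagonal_mul, mul_div_cancel₀ _ (hzero i)]
  have hB : ∀ i, ∑ j, B i j ^ 2 = 1 := fun i => by
    simp only [B, of_apply, div_pow, ← Finset.sum_div, ρ, Real.sq_sqrt (hsq_nonneg i)]
    exact div_self (by simpa [ρ, Real.sqrt_eq_zero (hsq_nonneg i)] using hzero i)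
  calc |A.det| = (∏ i, ρ i) * |B.det| := by
        rw [hfactor, det_mul, det_diagonal, abs_mul,
          abs_of_nonneg (Finset.prod_nonneg fun i _ => Real.sqrt_nonneg _)]
    _ ≤ ∏ i, ρ i :=
        mul_le_of_le_one_right (Finset.prod_nonneg fun i _ => Real.sqrt_nonneg _)
          (abs_det_le_one_of_sum_sq_row_eq_one hB)

end Matrix

theorem stmt1 {r : ℕ} (Q : Matrix (Fin r) (Fin r) ℝ)
    (hrow : ∀ i, Real.sqrt (∑ j, (Q i j) ^ 2) ≤ ∑ j, Q i j)
    (hsum : ∑ i, ∑ j, Q i j = (r : ℝ)) :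
    |Q.det| ≤ 1 :=
  calc |Q.det| ≤ ∏ i, √(∑ j, Q i j ^ 2) := abs_det_le_prod_sqrt_sum_sq_row Q
    _ ≤ ∏ i, ∑ j, Q i j :=
        Finset.prod_le_prod (fun i _ => Real.sqrt_nonneg _) (fun i _ => hrow i)
    _ ≤ 1 :=
        Real.prod_le_one_of_sum_le_card (fun i => (Real.sqrt_nonneg _).trans (hrow i))
          (by simp [hsum])
end

section
/- Let δ > 0, r ≥ 1, and let G be an r×r symmetric positive semidefinite matrix with diag(G) = e and 0 ≤ G(i,j) ≤ 1 for all i,j. Then log det(G + δI) ≥ log((r+δ)·δ^{r-1}), with equality if and only if G = ee^T (the all-ones matrix). -/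
/-!
The eigenvalues `μᵢ` of `G` are nonnegative, sum to `tr G = r`, and `det (G + δI) = ∏ (μᵢ + δ)`.
Expanding the product, everything beyond `δ^(r-1) (∑ μᵢ + δ)` is a nonnegative multiple of some
`μᵢ μⱼ` with `i ≠ j`, which gives the bound. At equality all these cross products vanish, so
`∑ μᵢ² = (∑ μᵢ)² = r²`. But `∑ μᵢ² = tr G² = ∑ᵢⱼ Gᵢⱼ²`, a sum of `r²` terms in `[0, 1]`, so every
entry of `G` equals `1`.
-/

open Matrix Finset

section ProdAddConst

variable {ι R : Type*} [CommRing R] [LinearOrder R] [IsStrictOrderedRing R]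
  {s : Finset ι} {x : ι → R} {δ : R}

theorem pow_mul_sum_add_le_prod_add (hδ : 0 ≤ δ) (hs : s.Nonempty)
    (hx : ∀ i ∈ s, 0 ≤ x i) :
    δ ^ (#s - 1) * (∑ i ∈ s, x i + δ) ≤ ∏ i ∈ s, (x i + δ) := by
  induction hs using Finset.Nonempty.cons_induction with
  | singleton a => simp
  | cons a t ha ht ih =>
    rw [forall_mem_cons] at hx
    obtain ⟨m, hm⟩ := Nat.exists_eq_add_one_of_ne_zero ht.card_pos.ne'
    have hcross : 0 ≤ δ ^ m * (x a * ∑ i ∈ t, x i) :=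
      mul_nonneg (pow_nonneg hδ m) (mul_nonneg hx.1 (sum_nonneg hx.2))
    rw [prod_cons, sum_cons, card_cons, hm, Nat.add_sub_cancel]
    rw [hm, Nat.add_sub_cancel] at ih
    calc δ ^ (m + 1) * (x a + ∑ i ∈ t, x i + δ)
        ≤ (x a + δ) * (δ ^ m * (∑ i ∈ t, x i + δ)) := by rw [pow_succ]; linarith
      _ ≤ (x a + δ) * ∏ i ∈ t, (x i + δ) := by gcongr; linarith [hx.1]; exact ih hx.2

theorem sq_sum_eq_sum_sq_of_prod_add_eq (hδ : 0 < δ) (hs : s.Nonempty)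
    (hx : ∀ i ∈ s, 0 ≤ x i)
    (heq : ∏ i ∈ s, (x i + δ) = δ ^ (#s - 1) * (∑ i ∈ s, x i + δ)) :
    (∑ i ∈ s, x i) ^ 2 = ∑ i ∈ s, x i ^ 2 := by
  induction hs using Finset.Nonempty.cons_induction with
  | singleton a => simp
  | cons a t ha ht ih =>
    rw [forall_mem_cons] at hx
    obtain ⟨m, hm⟩ := Nat.exists_eq_add_one_of_ne_zero ht.card_pos.ne'
    have hle := pow_mul_sum_add_le_prod_add hδ.le ht hx.2
    rw [prod_cons, sum_cons, card_cons, hm, Nat.add_sub_cancel, pow_succ] at heq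
    rw [hm, Nat.add_sub_cancel] at ih hle
    have hcross : x a * ∑ i ∈ t, x i = 0 := by
      have := mul_le_mul_of_nonneg_left hle (by linarith [hx.1] : 0 ≤ x a + δ)
      have : δ ^ m * (x a * ∑ i ∈ t, x i) ≤ 0 := by linarith
      exact le_antisymm (nonpos_of_mul_nonpos_right this (pow_pos hδ m))
        (mul_nonneg hx.1 (sum_nonneg hx.2))
    have htail : ∏ i ∈ t, (x i + δ) = δ ^ m * (∑ i ∈ t, x i + δ) := by
      refine mul_left_cancel₀ (by linarith [hx.1] : x a + δ ≠ 0) ?_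
      linear_combination heq - δ ^ m * hcross
    rw [sum_cons, sum_cons, ← ih hx.2 htail]
    linear_combination 2 * hcross

end ProdAddConst

theorem eq_one_of_sum_sq_eq_card {α R : Type*} [Fintype α] [CommRing R] [LinearOrder R]
    [IsStrictOrderedRing R] {f : α → R} (h0 : ∀ a, 0 ≤ f a) (h1 : ∀ a, f a ≤ 1)
    (hsum : ∑ a, f a ^ 2 = Fintype.card α) (a : α) : f a = 1 := by
  have hgap : ∑ b, (1 - f b ^ 2) = 0 := by simp [sum_sub_distrib, hsum]
  have := (sum_eq_zero_iff_of_nonneg fun b _ => by nlinarith [h0 b, h1 b]).mp hgap a (mem_univ a)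
  nlinarith [h0 a, h1 a]

namespace Matrix

theorem trace_transpose_mul_self {m n R : Type*} [Fintype m] [Fintype n] [CommSemiring R]
    (A : Matrix m n R) : (Aᵀ * A).trace = ∑ i, ∑ j, A i j ^ 2 := by
  rw [trace, Finset.sum_comm]
  simp [mul_apply, sq]

theorem det_ones_add_smul_one {n K : Type*} [Fintype n] [DecidableEq n] [Nonempty n] [Field K]
    {c : K} (hc : c ≠ 0) :
    (of (fun _ _ => (1 : K)) + c • (1 : Matrix n n K)).det
      = (Fintype.card n + c) * c ^ (Fintype.card n - 1) := by
  have hfactor : of (fun _ _ => (1 : K)) + c • (1 : Matrix n n K)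
      = c • (1 + replicateCol Unit (fun _ : n => c⁻¹) *
        replicateRow Unit (fun _ : n => (1 : K))) := by
    ext i j
    by_cases h : i = j <;> simp [mul_apply, h, mul_add, hc, add_comm]
  obtain ⟨m, hm⟩ := Nat.exists_eq_add_one_of_ne_zero (Fintype.card_ne_zero (α := n))
  rw [hfactor, det_smul, det_one_add_replicateCol_mul_replicateRow, hm, Nat.add_sub_cancel]
  simp [dotProduct, hm]
  field_simp
  ring

variable {n 𝕜 : Type*} [Fintype n] [DecidableEq n] [RCLike 𝕜] {A : Matrix n n 𝕜}

theorem IsHermitian.det_add_smul_one (hA : A.IsHermitian) (c : 𝕜) :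
    (A + c • 1).det = ∏ i, ((hA.eigenvalues i : 𝕜) + c) := by
  have hconj : A + c • 1 = Unitary.conjStarAlgAut 𝕜 _ hA.eigenvectorUnitary
      (diagonal (RCLike.ofReal ∘ hA.eigenvalues) + c • 1) := by
    rw [map_add, map_smul, map_one, ← hA.spectral_theorem]
  rw [hconj, Unitary.conjStarAlgAut_apply, det_mul_right_comm,
    Unitary.mul_star_self_of_mem hA.eigenvectorUnitary.2, one_mul, smul_one_eq_diagonal,
    diagonal_add, det_diagonal]
  rfl

theorem IsHermitian.trace_mul_self (hA : A.IsHermitian) :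
    (A * A).trace = ∑ i, (hA.eigenvalues i : 𝕜) ^ 2 := by
  have hconj : A * A = Unitary.conjStarAlgAut 𝕜 _ hA.eigenvectorUnitary
      (diagonal (RCLike.ofReal ∘ hA.eigenvalues) *
        diagonal (RCLike.ofReal ∘ hA.eigenvalues)) := by
    rw [map_mul, ← hA.spectral_theorem]
  rw [hconj, Unitary.conjStarAlgAut_apply, trace_mul_cycle,
    Unitary.star_mul_self_of_mem hA.eigenvectorUnitary.2, one_mul, diagonal_mul_diagonal,
    trace_diagonal]
  simp [sq]

theorem IsHermitian.eq_ones_of_sum_sq_eigenvalues {G : Matrix n n ℝ} (hG : G.IsHermitian)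
    (h0 : ∀ i j, 0 ≤ G i j) (h1 : ∀ i j, G i j ≤ 1)
    (hsq : ∑ i, hG.eigenvalues i ^ 2 = (Fintype.card n : ℝ) ^ 2) :
    G = of fun _ _ => 1 := by
  have hsymm : Gᵀ = G := (conjTranspose_eq_transpose_of_trivial G).symm.trans hG
  have hentries : ∑ p : n × n, G p.1 p.2 ^ 2 = Fintype.card (n × n) := by
    rw [Fintype.sum_prod_type' (fun i j => G i j ^ 2), ← trace_transpose_mul_self, hsymm,
      hG.trace_mul_self, Fintype.card_prod]
    push_cast
    simpa [sq] using hsq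
  ext i j
  exact eq_one_of_sum_sq_eq_card (fun p => h0 p.1 p.2) (fun p => h1 p.1 p.2) hentries (i, j)

end Matrix

theorem stmt7 {r : ℕ} (hr : 1 ≤ r) (δ : ℝ) (hδ : 0 < δ)
    (G : Matrix (Fin r) (Fin r) ℝ) (hG : G.PosSemidef)
    (hdiag : ∀ i, G i i = 1)
    (hrange : ∀ i j, 0 ≤ G i j ∧ G i j ≤ 1) :
    Real.log ((r + δ) * δ ^ (r - 1)) ≤ Real.log (G + δ • (1 : Matrix (Fin r) (Fin r) ℝ)).det ∧
      (Real.log (G + δ • (1 : Matrix (Fin r) (Fin r) ℝ)).det = Real.log ((r + δ) * δ ^ (r - 1)) ↔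
        G = Matrix.of (fun _ _ => (1 : ℝ))) := by
  have : Nonempty (Fin r) := Fin.pos_iff_nonempty.mp hr
  set μ := hG.1.eigenvalues
  have hμ : ∀ i ∈ univ, 0 ≤ μ i := fun i _ => hG.eigenvalues_nonneg i
  have htrace : ∑ i, μ i = r := by
    simpa [trace, hdiag] using hG.1.trace_eq_sum_eigenvalues.symm
  have hdet : (G + δ • 1).det = ∏ i, (μ i + δ) := by simpa using hG.1.det_add_smul_one δ
  have hlower : (r + δ) * δ ^ (r - 1) ≤ (G + δ • 1).det := by
    simpa [hdet, htrace, mul_comm] using pow_mul_sum_add_le_prod_add hδ.le univ_nonempty hμ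
  have hpos : 0 < (r + δ) * δ ^ (r - 1) := by positivity
  refine ⟨Real.log_le_log hpos hlower, fun hlog => ?_, fun hJ => ?_⟩
  · have hdet_eq : (G + δ • 1).det = (r + δ) * δ ^ (r - 1) :=
      Real.log_injOn_pos (hpos.trans_le hlower) hpos hlog
    have hextremal :
        ∏ i, (μ i + δ) = δ ^ (#(univ : Finset (Fin r)) - 1) * (∑ i, μ i + δ) := by
      rw [← hdet, hdet_eq, card_univ, Fintype.card_fin, htrace, mul_comm]
    refine hG.1.eq_ones_of_sum_sq_eigenvalues (fun i j => (hrange i j).1)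
      (fun i j => (hrange i j).2) ?_
    rw [Fintype.card_fin, ← htrace,
      sq_sum_eq_sum_sq_of_prod_add_eq hδ univ_nonempty hμ hextremal]
  · rw [hJ, det_ones_add_smul_one hδ.ne', Fintype.card_fin]
end

section
/- Let λ, ρ > 0 and let A ∈ 𝕊^r be symmetric with eigendecomposition A = P diag(d) P^T. Then the unique minimizer over Z ≻ 0 of −λ·log det(Z) + (ρ/2)‖Z − A‖_F² is Z* = P diag(φ(d)) P^T, where φ(x) = (x + √(x² + 4λ/ρ))/2 is applied entrywise to d. -/
/-!
Concavity of `log det` gives `log det Z ≤ log det S + tr (S⁻¹ (Z - S))` for positive definite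
`S, Z`. Hence at any `S ≻ 0` with `ρ (S - A) = λ S⁻¹` the first-order terms cancel and
`F Z ≥ F S + (ρ/2) ‖Z - S‖_F²`, which gives both minimality and uniqueness. Since `A = P diag(d) Pᵀ`
with `P` orthogonal, this stationarity condition reduces to `ρ (z - dᵢ) = λ / z` on the diagonal,
whose positive root is `z = φ (dᵢ)`.
-/

open Matrix

lemma half_add_sqrt_sq_add_pos (x : ℝ) {s : ℝ} (hs : 0 < s) :
    0 < (x + Real.sqrt (x ^ 2 + s)) / 2 := by
  have : |x| < Real.sqrt (x ^ 2 + s) := by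
    rw [← Real.sqrt_sq_eq_abs]
    exact Real.sqrt_lt_sqrt (sq_nonneg x) (by linarith)
  linarith [neg_le_abs x]

lemma mul_half_add_sqrt_sub_self {lam ρ : ℝ} (hlam : 0 < lam) (hρ : 0 < ρ) (x : ℝ) :
    ρ * ((x + Real.sqrt (x ^ 2 + 4 * lam / ρ)) / 2 - x) =
      lam / ((x + Real.sqrt (x ^ 2 + 4 * lam / ρ)) / 2) := by
  have hz := half_add_sqrt_sq_add_pos x (by positivity : 0 < 4 * lam / ρ)
  have hsq := Real.sq_sqrt (by positivity : 0 ≤ x ^ 2 + 4 * lam / ρ)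
  rw [eq_div_iff hz.ne']
  field_simp at hsq ⊢
  linear_combination hsq

namespace Matrix

variable {n : Type*} [Fintype n]

lemma sum_sum_mul_eq_trace_transpose_mul {m α : Type*} [Fintype m] [NonUnitalNonAssocSemiring α]
    (M N : Matrix m n α) :
    ∑ i, ∑ j, M i j * N i j = (Mᵀ * N).trace := by
  rw [Finset.sum_comm]
  simp [trace, mul_apply]

lemma eq_of_sum_sum_sq_sub_nonpos {m : Type*} [Fintype m] {M N : Matrix m n ℝ}
    (h : ∑ i, ∑ j, (M i j - N i j) ^ 2 ≤ 0) : M = N := by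
  have h0 : ∑ i, ∑ j, (M i j - N i j) ^ 2 = 0 := le_antisymm h (by positivity)
  ext i j
  rw [Fintype.sum_eq_zero_iff_of_nonneg fun _ => by positivity] at h0
  have h1 : ∑ j, (M i j - N i j) ^ 2 = 0 := congrFun h0 i
  rw [Fintype.sum_eq_zero_iff_of_nonneg fun _ => by positivity] at h1
  simpa [sub_eq_zero] using congrFun h1 j

variable [DecidableEq n]

section Orthogonal

variable {K : Type*} [Field K] {P : Matrix n n K}

lemma conj_diagonal_mul_conj_diagonal (hP : P * Pᵀ = 1) (v w : n → K) :
    P * diagonal v * Pᵀ * (P * diagonal w * Pᵀ) = P * diagonal (v * w) * Pᵀ := by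
  have hPtP : Pᵀ * P = 1 := mul_eq_one_comm.mp hP
  simp only [Matrix.mul_assoc]
  rw [← Matrix.mul_assoc Pᵀ, hPtP, Matrix.one_mul, ← Matrix.mul_assoc (diagonal v),
    diagonal_mul_diagonal]
  rfl

lemma inv_conj_diagonal (hP : P * Pᵀ = 1) {v : n → K} (hv : ∀ i, v i ≠ 0) :
    (P * diagonal v * Pᵀ)⁻¹ = P * diagonal v⁻¹ * Pᵀ := by
  have hvv : v * v⁻¹ = fun _ => 1 := funext fun i => mul_inv_cancel₀ (hv i)
  refine inv_eq_right_inv ?_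
  rw [conj_diagonal_mul_conj_diagonal hP, hvv, diagonal_one, Matrix.mul_one, hP]

lemma conj_diagonal_sub_conj_diagonal (P : Matrix n n K) (v w : n → K) :
    P * diagonal v * Pᵀ - P * diagonal w * Pᵀ = P * diagonal (v - w) * Pᵀ := by
  rw [← Matrix.sub_mul, ← Matrix.mul_sub, diagonal_sub]
  rfl

end Orthogonal

lemma PosDef.conj_diagonal {P : Matrix n n ℝ} (hP : P * Pᵀ = 1) {v : n → ℝ} (hv : ∀ i, 0 < v i) :
    (P * diagonal v * Pᵀ).PosDef := by
  have hPunit : IsUnit P := IsUnit.of_mul_eq_one Pᵀ hP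
  simpa only [conjTranspose_eq_transpose_of_trivial] using
    (PosDef.diagonal hv).mul_mul_conjTranspose_same (vecMul_injective_iff_isUnit.mpr hPunit)

lemma PosDef.log_det_le_trace_sub_card {B : Matrix n n ℝ} (hB : B.PosDef) :
    Real.log B.det ≤ B.trace - Fintype.card n := by
  have hev := hB.eigenvalues_pos
  rw [hB.isHermitian.det_eq_prod_eigenvalues, hB.isHermitian.trace_eq_sum_eigenvalues]
  simp only [RCLike.ofReal_real_eq_id, id_eq]
  rw [Real.log_prod fun i _ => (hev i).ne', Fintype.card_eq_sum_ones, Nat.cast_sum,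
    ← Finset.sum_sub_distrib]
  push_cast
  exact Finset.sum_le_sum fun i _ => Real.log_le_sub_one_of_pos (hev i)

open scoped MatrixOrder in
lemma PosDef.log_det_sub_log_det_le {Z S : Matrix n n ℝ} (hZ : Z.PosDef) (hS : S.PosDef) :
    Real.log Z.det - Real.log S.det ≤ (S⁻¹ * Z).trace - Fintype.card n := by
  set R := CFC.sqrt S⁻¹
  have hRR : R * R = S⁻¹ := CFC.sqrt_mul_sqrt_self S⁻¹ hS.inv.posSemidef.nonneg
  have hRherm : Rᴴ = R := (CFC.sqrt_nonneg S⁻¹).posSemidef.isHermitian.eq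
  have hRunit : IsUnit R := isUnit_of_mul_isUnit_left (hRR ▸ hS.inv.isUnit)
  have hB : (R * Z * R).PosDef := by
    simpa only [hRherm] using hZ.conjTranspose_mul_mul_same (mulVec_injective_iff_isUnit.mpr hRunit)
  have hRdet : R.det * R.det = (S.det)⁻¹ := by
    rw [← det_mul, hRR, det_nonsing_inv, Ring.inverse_eq_inv']
  have hdet : (R * Z * R).det = Z.det * (S.det)⁻¹ := by
    rw [det_mul, det_mul]
    linear_combination Z.det * hRdet
  have htr : (R * Z * R).trace = (S⁻¹ * Z).trace := by
    rw [trace_mul_comm, ← Matrix.mul_assoc, hRR]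
  have h := hB.log_det_le_trace_sub_card
  rwa [hdet, htr, Real.log_mul hZ.det_pos.ne' (inv_ne_zero hS.det_pos.ne'), Real.log_inv,
    ← sub_eq_add_neg] at h

/-- `-λ log det Z + (ρ/2) ‖Z - A‖_F²`, the objective of the proximal map of `-λ log det` at `A`. -/
noncomputable def logDetProxObjective (lam ρ : ℝ) (A Z : Matrix n n ℝ) : ℝ :=
  -lam * Real.log Z.det + (ρ / 2) * ∑ i, ∑ j, (Z i j - A i j) ^ 2

/-- The first-order condition `ρ (S - A) = λ S⁻¹` makes `S` a minimiser with quadratic growth. -/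
lemma logDetProxObjective_add_le_of_stationary {lam ρ : ℝ} (hlam : 0 ≤ lam)
    {A S Z : Matrix n n ℝ} (hS : S.PosDef) (hZ : Z.PosDef) (hstat : ρ • (S - A) = lam • S⁻¹) :
    logDetProxObjective lam ρ A S + (ρ / 2) * ∑ i, ∑ j, (Z i j - S i j) ^ 2 ≤
      logDetProxObjective lam ρ A Z := by
  have hexp : ∑ i, ∑ j, (Z i j - A i j) ^ 2 = ∑ i, ∑ j, (S i j - A i j) ^ 2 +
      2 * ∑ i, ∑ j, (S - A) i j * (Z - S) i j + ∑ i, ∑ j, (Z i j - S i j) ^ 2 := by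
    simp only [Finset.mul_sum, ← Finset.sum_add_distrib]
    refine Finset.sum_congr rfl fun i _ => Finset.sum_congr rfl fun j _ => ?_
    simp only [sub_apply]
    ring
  have hSinvT : (S⁻¹)ᵀ = S⁻¹ := by
    simpa only [conjTranspose_eq_transpose_of_trivial] using hS.inv.isHermitian.eq
  have hcross : ρ * ∑ i, ∑ j, (S - A) i j * (Z - S) i j =
      lam * ((S⁻¹ * Z).trace - Fintype.card n) := by
    calc ρ * ∑ i, ∑ j, (S - A) i j * (Z - S) i j
        = ∑ i, ∑ j, (ρ • (S - A)) i j * (Z - S) i j := by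
          simp only [Finset.mul_sum, smul_apply, smul_eq_mul, mul_assoc]
      _ = lam * ((S⁻¹)ᵀ * (Z - S)).trace := by
          rw [hstat, sum_sum_mul_eq_trace_transpose_mul, transpose_smul, Matrix.smul_mul,
            trace_smul, smul_eq_mul]
      _ = lam * ((S⁻¹ * Z).trace - Fintype.card n) := by
          rw [hSinvT, Matrix.mul_sub, trace_sub, nonsing_inv_mul S hS.det_pos.ne'.isUnit, trace_one]
  have htan := hZ.log_det_sub_log_det_le hS
  unfold logDetProxObjective
  rw [hexp]
  nlinarith [mul_le_mul_of_nonneg_left htan hlam]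

end Matrix

theorem stmt12_general {r : ℕ} (lam ρ : ℝ) (hlam : 0 < lam) (hρ : 0 < ρ)
    (A P : Matrix (Fin r) (Fin r) ℝ) (d : Fin r → ℝ)
    (hP : P * Pᵀ = 1) (hdecomp : A = P * Matrix.diagonal d * Pᵀ) :
    letI φ : ℝ → ℝ := fun x => (x + Real.sqrt (x ^ 2 + 4 * lam / ρ)) / 2
    letI Zstar := P * Matrix.diagonal (fun i => φ (d i)) * Pᵀ
    letI F : Matrix (Fin r) (Fin r) ℝ → ℝ := fun Z =>
      -lam * Real.log Z.det + (ρ / 2) * ∑ i, ∑ j, (Z i j - A i j) ^ 2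
    Zstar.PosDef ∧
      (∀ Z : Matrix (Fin r) (Fin r) ℝ, Z.PosDef → F Zstar ≤ F Z) ∧
      (∀ Z : Matrix (Fin r) (Fin r) ℝ, Z.PosDef → F Z = F Zstar → Z = Zstar) := by
  beta_reduce
  set c : Fin r → ℝ := fun i => (d i + Real.sqrt (d i ^ 2 + 4 * lam / ρ)) / 2
  set Zstar := P * diagonal c * Pᵀ
  have hc : ∀ i, 0 < c i := fun i => half_add_sqrt_sq_add_pos (d i) (by positivity)
  have hZstar : Zstar.PosDef := PosDef.conj_diagonal hP hc
  have hroot : ρ • (c - d) = lam • c⁻¹ :=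
    funext fun i => (mul_half_add_sqrt_sub_self hlam hρ (d i)).trans (div_eq_mul_inv _ _)
  have hstat : ρ • (Zstar - A) = lam • Zstar⁻¹ := by
    rw [hdecomp, conj_diagonal_sub_conj_diagonal, inv_conj_diagonal hP fun i => (hc i).ne',
      ← Matrix.smul_mul, ← Matrix.mul_smul, ← diagonal_smul, hroot, diagonal_smul,
      Matrix.mul_smul, Matrix.smul_mul]
  have hgrowth (Z : Matrix (Fin r) (Fin r) ℝ) (hZ : Z.PosDef) :
      logDetProxObjective lam ρ A Zstar + (ρ / 2) * ∑ i, ∑ j, (Z i j - Zstar i j) ^ 2 ≤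
        logDetProxObjective lam ρ A Z :=
    logDetProxObjective_add_le_of_stationary hlam.le hZstar hZ hstat
  refine ⟨hZstar, fun Z hZ => ?_, fun Z hZ hF => ?_⟩
  · exact le_trans (le_add_of_nonneg_right (by positivity)) (hgrowth Z hZ)
  · have h : logDetProxObjective lam ρ A Zstar + (ρ / 2) * ∑ i, ∑ j, (Z i j - Zstar i j) ^ 2 ≤
        logDetProxObjective lam ρ A Zstar := (hgrowth Z hZ).trans_eq hF
    exact eq_of_sum_sum_sq_sub_nonpos (by nlinarith)

theorem stmt12 {r : ℕ} (lam ρ : ℝ) (hlam : 0 < lam) (hρ : 0 < ρ)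
    (A P : Matrix (Fin r) (Fin r) ℝ) (d : Fin r → ℝ)
    (hA : A.IsSymm) (hP : P * Pᵀ = 1) (hdecomp : A = P * Matrix.diagonal d * Pᵀ) :
    letI φ : ℝ → ℝ := fun x => (x + Real.sqrt (x ^ 2 + 4 * lam / ρ)) / 2
    letI Zstar := P * Matrix.diagonal (fun i => φ (d i)) * Pᵀ
    letI F : Matrix (Fin r) (Fin r) ℝ → ℝ := fun Z =>
      -lam * Real.log Z.det + (ρ / 2) * ∑ i, ∑ j, (Z i j - A i j) ^ 2
    Zstar.PosDef ∧
      (∀ Z : Matrix (Fin r) (Fin r) ℝ, Z.PosDef → F Zstar ≤ F Z) ∧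
      (∀ Z : Matrix (Fin r) (Fin r) ℝ, Z.PosDef → F Z = F Zstar → Z = Zstar) :=
  stmt12_general lam ρ hlam hρ A P d hP hdecomp
end

section
/- Let h(H) = (α/4)‖H‖_F⁴ + (σ/2)‖H‖_F² with α ≥ 6 and σ ≥ 2‖Y‖₂ for a fixed symmetric matrix Y. Then g(H) = (1/2)‖Y − HH^T‖_F² is 1-smooth relative to h: for all H, U ∈ ℝ^{r×n}, ∇²g(H)[U,U] ≤ ∇²h(H)[U,U]. -/
/-!
Along a line `t ↦ H + t • U` both `g` and `h` are quartic polynomials in `t`, so their second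
derivatives at `0` are twice their `t²`-coefficients. Writing `⟨A, B⟩ = vec A ⬝ᵥ vec B` for the
Frobenius inner product, that of `g` is `‖HUᵀ + UHᵀ‖² + 2‖HᵀU‖² - 2⟨Y, UUᵀ⟩` and that of `h` is
`α (2⟨H, U⟩² + ‖H‖²‖U‖²) + σ‖U‖²`. Submultiplicativity of the Frobenius norm bounds the first two
terms by `4‖H‖²‖U‖²` and `2‖H‖²‖U‖²`, the hypothesis on `Y` applied to each column of `U` gives
`|⟨Y, UUᵀ⟩| ≤ (σ/2)‖U‖²`, and `α ≥ 6` absorbs the rest.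
-/

open Matrix

/-- Squared Frobenius norm. -/
def frobSq {r n : ℕ} (M : Matrix (Fin r) (Fin n) ℝ) : ℝ := ∑ i, ∑ j, (M i j) ^ 2

open Polynomial
open scoped Nat

section

variable {𝕜 : Type*} [NontriviallyNormedField 𝕜]

theorem iteratedDeriv_polynomial_eval (p : 𝕜[X]) (k : ℕ) :
    iteratedDeriv k (fun t => p.eval t) = fun t => (derivative^[k] p).eval t := by
  induction k generalizing p with
  | zero => simp
  | succ k ih =>
    rw [iteratedDeriv_succ', Function.iterate_succ_apply, ← ih]
    congr 1
    ext t
    exact Polynomial.deriv p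

theorem iteratedDeriv_polynomial_eval_zero (p : 𝕜[X]) (k : ℕ) :
    iteratedDeriv k (fun t => p.eval t) 0 = k ! * p.coeff k := by
  simp only [iteratedDeriv_polynomial_eval, ← coeff_zero_eq_eval_zero, coeff_iterate_derivative,
    zero_add, Nat.descFactorial_self, nsmul_eq_mul]

theorem iteratedDeriv_two_quartic (c₀ c₁ c₂ c₃ c₄ : 𝕜) :
    iteratedDeriv 2 (fun t : 𝕜 => c₀ + c₁ * t + c₂ * t ^ 2 + c₃ * t ^ 3 + c₄ * t ^ 4) 0
      = 2 * c₂ := by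
  set p : 𝕜[X] := C c₀ + C c₁ * X + C c₂ * X ^ 2 + C c₃ * X ^ 3 + C c₄ * X ^ 4
  have eval_p :
      (fun t => p.eval t) = fun t => c₀ + c₁ * t + c₂ * t ^ 2 + c₃ * t ^ 3 + c₄ * t ^ 4 := by
    ext t; simp [p]
  have coeff_p : p.coeff 2 = c₂ := by
    simp [p, coeff_X_pow]
  rw [← eval_p, iteratedDeriv_polynomial_eval_zero, coeff_p]
  norm_num

theorem iteratedDeriv_two_comp_quadratic (p q a b c : 𝕜) :
    iteratedDeriv 2 (fun t : 𝕜 => p * (a + b * t + c * t ^ 2) ^ 2 + q * (a + b * t + c * t ^ 2)) 0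
      = 2 * (p * (b ^ 2 + 2 * a * c) + q * c) := by
  have quartic : (fun t : 𝕜 => p * (a + b * t + c * t ^ 2) ^ 2 + q * (a + b * t + c * t ^ 2))
      = fun t => (p * a ^ 2 + q * a) + (2 * p * a * b + q * b) * t
        + (p * (b ^ 2 + 2 * a * c) + q * c) * t ^ 2 + 2 * p * b * c * t ^ 3
        + p * c ^ 2 * t ^ 4 := by
    ext t; ring
  rw [quartic, iteratedDeriv_two_quartic]

end

theorem dotProduct_self_quadratic {ι R : Type*} [Fintype ι] [CommRing R] (a b c : ι → R)
    (t : R) :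
    (a + t • b + t ^ 2 • c) ⬝ᵥ (a + t • b + t ^ 2 • c) = a ⬝ᵥ a + 2 * (a ⬝ᵥ b) * t
      + (b ⬝ᵥ b + 2 * (a ⬝ᵥ c)) * t ^ 2 + 2 * (b ⬝ᵥ c) * t ^ 3 + c ⬝ᵥ c * t ^ 4 := by
  simp only [add_dotProduct, dotProduct_add, smul_dotProduct, dotProduct_smul, smul_eq_mul,
    dotProduct_comm b a, dotProduct_comm c a, dotProduct_comm c b]
  ring

theorem iteratedDeriv_two_dotProduct_self_quadratic {ι 𝕜 : Type*} [Fintype ι]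
    [NontriviallyNormedField 𝕜] (a b c : ι → 𝕜) :
    iteratedDeriv 2 (fun t : 𝕜 => (a + t • b + t ^ 2 • c) ⬝ᵥ (a + t • b + t ^ 2 • c)) 0
      = 2 * (b ⬝ᵥ b + 2 * (a ⬝ᵥ c)) := by
  simp only [dotProduct_self_quadratic, iteratedDeriv_two_quartic]

theorem frobSq_eq_vec_dotProduct {r n : ℕ} (M : Matrix (Fin r) (Fin n) ℝ) :
    frobSq M = vec M ⬝ᵥ vec M := by
  rw [frobSq, dotProduct, Fintype.sum_prod_type, Finset.sum_comm]
  simp [vec, sq]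

theorem frobSq_transpose {r n : ℕ} (M : Matrix (Fin r) (Fin n) ℝ) : frobSq Mᵀ = frobSq M :=
  Finset.sum_comm

theorem frobSq_nonneg {r n : ℕ} (M : Matrix (Fin r) (Fin n) ℝ) : 0 ≤ frobSq M := by
  unfold frobSq; positivity

section
open scoped Matrix.Norms.Frobenius

theorem frobSq_eq_norm_sq {r n : ℕ} (M : Matrix (Fin r) (Fin n) ℝ) : frobSq M = ‖M‖ ^ 2 := by
  rw [frobenius_norm_def, ← Real.rpow_natCast, ← Real.rpow_mul (by positivity)]
  norm_num [frobSq]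

theorem frobSq_mul_le {l m n : ℕ} (A : Matrix (Fin l) (Fin m) ℝ) (B : Matrix (Fin m) (Fin n) ℝ) :
    frobSq (A * B) ≤ frobSq A * frobSq B := by
  simp only [frobSq_eq_norm_sq, ← mul_pow]
  exact pow_le_pow_left₀ (norm_nonneg _) (frobenius_norm_mul A B) 2

theorem frobSq_mul_transpose_add_le {r n : ℕ} (H U : Matrix (Fin r) (Fin n) ℝ) :
    frobSq (H * Uᵀ + U * Hᵀ) ≤ 4 * (frobSq H * frobSq U) := by
  have : ‖H * Uᵀ + U * Hᵀ‖ ≤ 2 * (‖H‖ * ‖U‖) := calc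
    _ ≤ ‖H‖ * ‖Uᵀ‖ + ‖U‖ * ‖Hᵀ‖ :=
      (norm_add_le _ _).trans (add_le_add (frobenius_norm_mul _ _) (frobenius_norm_mul _ _))
    _ = 2 * (‖H‖ * ‖U‖) := by rw [frobenius_norm_transpose, frobenius_norm_transpose]; ring
  simp only [frobSq_eq_norm_sq]
  nlinarith [norm_nonneg (H * Uᵀ + U * Hᵀ)]

end

theorem frobSq_add_smul {r n : ℕ} (H U : Matrix (Fin r) (Fin n) ℝ) (t : ℝ) :
    frobSq (H + t • U) = frobSq H + 2 * (vec H ⬝ᵥ vec U) * t + frobSq U * t ^ 2 := by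
  simp only [frobSq_eq_vec_dotProduct, vec_add, vec_smul, add_dotProduct, dotProduct_add,
    smul_dotProduct, dotProduct_smul, smul_eq_mul, dotProduct_comm (vec U) (vec H)]
  ring

theorem sub_mul_transpose_add_smul {r n : ℕ} (Y : Matrix (Fin r) (Fin r) ℝ)
    (H U : Matrix (Fin r) (Fin n) ℝ) (t : ℝ) :
    Y - (H + t • U) * (H + t • U)ᵀ
      = (Y - H * Hᵀ) + t • -(H * Uᵀ + U * Hᵀ) + t ^ 2 • -(U * Uᵀ) := by
  simp only [transpose_add, transpose_smul, Matrix.add_mul, Matrix.mul_add, Matrix.smul_mul,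
    Matrix.mul_smul]
  module

theorem vec_mul_transpose_dotProduct_eq_frobSq {r n : ℕ} (H U : Matrix (Fin r) (Fin n) ℝ) :
    vec (H * Hᵀ) ⬝ᵥ vec (U * Uᵀ) = frobSq (Hᵀ * U) := by
  rw [frobSq_eq_vec_dotProduct, vec_dotProduct_vec, vec_dotProduct_vec, transpose_mul,
    transpose_transpose, transpose_mul, transpose_transpose, trace_mul_comm, Matrix.mul_assoc,
    trace_mul_comm]
  simp only [Matrix.mul_assoc]

theorem iteratedDeriv_two_half_frobSq_sub_mul_transpose {r n : ℕ} (Y : Matrix (Fin r) (Fin r) ℝ)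
    (H U : Matrix (Fin r) (Fin n) ℝ) :
    iteratedDeriv 2 (fun t : ℝ => 1 / 2 * frobSq (Y - (H + t • U) * (H + t • U)ᵀ)) 0
      = frobSq (H * Uᵀ + U * Hᵀ) + 2 * frobSq (Hᵀ * U) - 2 * (vec Y ⬝ᵥ vec (U * Uᵀ)) := by
  conv_lhs => simp only [sub_mul_transpose_add_smul, frobSq_eq_vec_dotProduct, vec_add, vec_smul]
  rw [iteratedDeriv_const_mul_field, iteratedDeriv_two_dotProduct_self_quadratic,
    ← vec_mul_transpose_dotProduct_eq_frobSq]
  simp only [vec_neg, vec_sub, neg_dotProduct, dotProduct_neg, sub_dotProduct, neg_neg,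
    ← frobSq_eq_vec_dotProduct]
  ring

theorem vec_dotProduct_vec_mul_transpose_eq_sum {r n : ℕ} (Y : Matrix (Fin r) (Fin r) ℝ)
    (U : Matrix (Fin r) (Fin n) ℝ) :
    vec Y ⬝ᵥ vec (U * Uᵀ) = ∑ k, ∑ i, ∑ j, U i k * Y i j * U j k := by
  simp only [dotProduct, vec, Fintype.sum_prod_type, mul_apply, transpose_apply, Finset.mul_sum]
  rw [Finset.sum_comm]
  conv_rhs => rw [Finset.sum_comm]
  refine Finset.sum_congr rfl fun i _ => ?_
  rw [Finset.sum_comm]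
  exact Finset.sum_congr rfl fun j _ => Finset.sum_congr rfl fun k _ => by ring

theorem abs_vec_dotProduct_mul_transpose_le {r n : ℕ} {Y : Matrix (Fin r) (Fin r) ℝ} {c : ℝ}
    (hY : ∀ x : Fin r → ℝ, |∑ i, ∑ j, x i * Y i j * x j| ≤ c * ∑ i, x i ^ 2)
    (U : Matrix (Fin r) (Fin n) ℝ) : |vec Y ⬝ᵥ vec (U * Uᵀ)| ≤ c * frobSq U := by
  have sum_columns : frobSq U = ∑ k, ∑ i, U i k ^ 2 := Finset.sum_comm
  rw [vec_dotProduct_vec_mul_transpose_eq_sum, sum_columns, Finset.mul_sum]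
  exact (Finset.abs_sum_le_sum_abs _ _).trans (Finset.sum_le_sum fun k _ => hY fun i => U i k)

theorem stmt14_general {r n : ℕ} (α σ : ℝ) (Y : Matrix (Fin r) (Fin r) ℝ)
    (hα : 6 ≤ α)
    -- σ ≥ 2‖Y‖₂ : the spectral norm of the symmetric matrix Y, expressed via quadratic forms
    (hσ : ∀ x : Fin r → ℝ, |∑ i, ∑ j, x i * Y i j * x j| ≤ (σ / 2) * ∑ i, (x i) ^ 2) :
    letI h : Matrix (Fin r) (Fin n) ℝ → ℝ := fun H =>
      (α / 4) * (frobSq H) ^ 2 + (σ / 2) * frobSq H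
    letI g : Matrix (Fin r) (Fin n) ℝ → ℝ := fun H => (1 / 2) * frobSq (Y - H * Hᵀ)
    ∀ H U : Matrix (Fin r) (Fin n) ℝ,
      iteratedDeriv 2 (fun t : ℝ => g (H + t • U)) 0 ≤
        iteratedDeriv 2 (fun t : ℝ => h (H + t • U)) 0 := by
  intro H U
  simp only [frobSq_add_smul, iteratedDeriv_two_comp_quadratic,
    iteratedDeriv_two_half_frobSq_sub_mul_transpose]
  have hsym := frobSq_mul_transpose_add_le H U
  have hHU := frobSq_transpose H ▸ frobSq_mul_le Hᵀ U
  have hYU := abs_le.mp (abs_vec_dotProduct_mul_transpose_le hσ U)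
  have hHU_nonneg := mul_nonneg (frobSq_nonneg H) (frobSq_nonneg U)
  calc _ ≤ 6 * (frobSq H * frobSq U) + σ * frobSq U := by linarith
    _ ≤ _ := by
      nlinarith [mul_nonneg (sub_nonneg.2 hα) hHU_nonneg,
        mul_nonneg (by linarith : (0 : ℝ) ≤ α) (sq_nonneg (2 * vec H ⬝ᵥ vec U))]

theorem stmt14 {r n : ℕ} (α σ : ℝ) (Y : Matrix (Fin r) (Fin r) ℝ) (hY : Y.IsSymm)
    (hα : 6 ≤ α)
    -- σ ≥ 2‖Y‖₂ : the spectral norm of the symmetric matrix Y, expressed via quadratic forms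
    (hσ : ∀ x : Fin r → ℝ, |∑ i, ∑ j, x i * Y i j * x j| ≤ (σ / 2) * ∑ i, (x i) ^ 2) :
    letI h : Matrix (Fin r) (Fin n) ℝ → ℝ := fun H =>
      (α / 4) * (frobSq H) ^ 2 + (σ / 2) * frobSq H
    letI g : Matrix (Fin r) (Fin n) ℝ → ℝ := fun H => (1 / 2) * frobSq (Y - H * Hᵀ)
    ∀ H U : Matrix (Fin r) (Fin n) ℝ,
      iteratedDeriv 2 (fun t : ℝ => g (H + t • U)) 0 ≤
        iteratedDeriv 2 (fun t : ℝ => h (H + t • U)) 0 :=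
  stmt14_general α σ Y hα hσ
end

section
/- Let H ∈ ℝ_+^{r×n} satisfy SSC1: the cone C = {x ∈ ℝ_+^r : e^T x ≥ √(r−1)·‖x‖₂} is contained in cone(H). Let Q ∈ ℝ^{r×r} with QH ≥ 0 entrywise. Then cone(Q^T) ⊆ C* where C* = {y ∈ ℝ^r : e^T y ≥ ‖y‖₂}, i.e., Q(i,:)e ≥ ‖Q(i,:)‖₂ for all i. -/
open Matrix

/-- Conic hull of the columns of a matrix `M`. -/
def coneOf {r n : ℕ} (M : Matrix (Fin r) (Fin n) ℝ) : Set (Fin r → ℝ) :=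
  {y | ∃ c : Fin n → ℝ, (∀ j, 0 ≤ c j) ∧ y = M.mulVec c}

lemma key_dual {r : ℕ} (y : Fin r → ℝ)
    (h : ∀ x : Fin r → ℝ, (∀ i, 0 ≤ x i) →
      Real.sqrt ((r : ℝ) - 1) * Real.sqrt (∑ i, (x i) ^ 2) ≤ ∑ i, x i →
      0 ≤ ∑ i, y i * x i) :
    Real.sqrt (∑ i, (y i) ^ 2) ≤ ∑ i, y i := by
  set s : ℝ := ∑ i, y i with hs
  set nn : ℝ := Real.sqrt (∑ i, (y i) ^ 2) with hnn
  have hsum_nonneg : (0:ℝ) ≤ ∑ i, (y i) ^ 2 :=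
    Finset.sum_nonneg fun i _ => sq_nonneg _
  have hnn_nonneg : 0 ≤ nn := Real.sqrt_nonneg _
  have hnn2 : nn ^ 2 = ∑ i, (y i) ^ 2 := Real.sq_sqrt hsum_nonneg
  have hyle : ∀ i, y i ≤ nn := by
    intro i
    have h1 : (y i) ^ 2 ≤ nn ^ 2 := by
      rw [hnn2]
      exact Finset.single_le_sum (fun j _ => sq_nonneg (y j)) (Finset.mem_univ i)
    nlinarith
  have hyge : ∀ i, -nn ≤ y i := by
    intro i
    have h1 : (y i) ^ 2 ≤ nn ^ 2 := by
      rw [hnn2]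
      exact Finset.single_le_sum (fun j _ => sq_nonneg (y j)) (Finset.mem_univ i)
    nlinarith
  -- the test vector
  set x : Fin r → ℝ := fun i => nn - y i with hx
  have hx0 : ∀ i, 0 ≤ x i := fun i => sub_nonneg.mpr (hyle i)
  have hsumx : ∑ i, x i = r * nn - s := by
    simp [hx, Finset.sum_sub_distrib, hs, Finset.card_univ, mul_comm]
  have hsumx2 : ∑ i, (x i) ^ 2 = (r + 1) * nn ^ 2 - 2 * nn * s := by
    have : ∀ i, (x i) ^ 2 = nn ^ 2 - 2 * nn * y i + (y i) ^ 2 := by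
      intro i; simp [hx]; ring
    rw [Finset.sum_congr rfl (fun i _ => this i)]
    rw [Finset.sum_add_distrib, Finset.sum_sub_distrib, ← hnn2, ← Finset.mul_sum, ← hs]
    simp [Finset.card_univ]
    ring
  have hsle : s ≤ r * nn := by
    have := Finset.sum_le_sum (fun i (_ : i ∈ Finset.univ) => hyle i)
    simpa [hs, Finset.card_univ, mul_comm] using this
  have hxsum_nonneg : (0:ℝ) ≤ ∑ i, (x i) ^ 2 :=
    Finset.sum_nonneg fun i _ => sq_nonneg _
  -- membership of x in the cone
  have hmem : Real.sqrt ((r : ℝ) - 1) * Real.sqrt (∑ i, (x i) ^ 2) ≤ ∑ i, x i := by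
    rcases le_or_gt ((r : ℝ) - 1) 0 with hr | hr
    · have : Real.sqrt ((r : ℝ) - 1) = 0 := Real.sqrt_eq_zero_of_nonpos hr
      rw [this, zero_mul]
      exact Finset.sum_nonneg fun i _ => hx0 i
    · have hprod : Real.sqrt ((r : ℝ) - 1) * Real.sqrt (∑ i, (x i) ^ 2)
          = Real.sqrt (((r : ℝ) - 1) * ∑ i, (x i) ^ 2) :=
        (Real.sqrt_mul (le_of_lt hr) _).symm
      rw [hprod]
      have hkey : ((r : ℝ) - 1) * ∑ i, (x i) ^ 2 ≤ (r * nn - s) ^ 2 := by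
        rw [hsumx2]
        nlinarith [sq_nonneg (nn - s)]
      calc Real.sqrt (((r : ℝ) - 1) * ∑ i, (x i) ^ 2)
          ≤ Real.sqrt ((r * nn - s) ^ 2) := Real.sqrt_le_sqrt hkey
        _ = r * nn - s := Real.sqrt_sq (by linarith)
        _ = ∑ i, x i := hsumx.symm
  have hdot := h x hx0 hmem
  have hdot' : 0 ≤ nn * s - nn ^ 2 := by
    have : ∑ i, y i * x i = nn * s - nn ^ 2 := by
      have : ∀ i, y i * x i = nn * y i - (y i) ^ 2 := by
        intro i; simp [hx]; ring
      rw [Finset.sum_congr rfl (fun i _ => this i), Finset.sum_sub_distrib,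
        ← Finset.mul_sum, ← hs, ← hnn2]
    linarith [this ▸ hdot]
  rcases eq_or_lt_of_le hnn_nonneg with h0 | hpos
  · -- nn = 0, so every y i = 0
    have hz : ∀ i, y i = 0 := by
      intro i
      have h1 : (y i) ^ 2 ≤ nn ^ 2 := by
        rw [hnn2]
        exact Finset.single_le_sum (fun j _ => sq_nonneg (y j)) (Finset.mem_univ i)
      nlinarith [hyle i, hyge i]
    have : s = 0 := by simp [hs, hz]
    rw [← h0, hs] at *
    linarith
  · nlinarith

theorem stmt17 {r n : ℕ} (H : Matrix (Fin r) (Fin n) ℝ)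
    (hH0 : ∀ i j, 0 ≤ H i j)
    (hSSC1 : {x : Fin r → ℝ | (∀ i, 0 ≤ x i) ∧
        Real.sqrt ((r : ℝ) - 1) * Real.sqrt (∑ i, (x i) ^ 2) ≤ ∑ i, x i} ⊆ coneOf H)
    (Q : Matrix (Fin r) (Fin r) ℝ) (hQH : ∀ i j, 0 ≤ (Q * H) i j) :
    (∀ y ∈ coneOf Qᵀ, Real.sqrt (∑ i, (y i) ^ 2) ≤ ∑ i, y i) ∧
      ∀ i, Real.sqrt (∑ j, (Q i j) ^ 2) ≤ ∑ j, Q i j := by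
  have main : ∀ y ∈ coneOf Qᵀ, Real.sqrt (∑ i, (y i) ^ 2) ≤ ∑ i, y i := by
    rintro y ⟨a, ha, rfl⟩
    apply key_dual
    intro x hx1 hx2
    obtain ⟨c, hc, rfl⟩ := hSSC1 ⟨hx1, hx2⟩
    have h1 : (Qᵀ.mulVec a) ⬝ᵥ (H.mulVec c) = (a ᵥ* (Q * H)) ⬝ᵥ c := by
      rw [Matrix.mulVec_transpose, Matrix.dotProduct_mulVec, Matrix.vecMul_vecMul]
    have h2 : ∑ i, (Qᵀ.mulVec a) i * (H.mulVec c) i = ∑ j, (a ᵥ* (Q * H)) j * c j := h1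
    rw [h2]
    apply Finset.sum_nonneg
    intro j _
    refine mul_nonneg ?_ (hc j)
    simp only [Matrix.vecMul, dotProduct]
    exact Finset.sum_nonneg fun k _ => mul_nonneg (ha k) (hQH k j)
  refine ⟨main, fun i => ?_⟩
  have hmem : (fun j => Q i j) ∈ coneOf Qᵀ := by
    refine ⟨Pi.single i 1, fun j => ?_, ?_⟩
    · by_cases h : j = i <;> simp [Pi.single_apply, h]
    · funext j
      simp [Matrix.mulVec, dotProduct, Pi.single_apply, Matrix.transpose_apply]
  exact main _ hmem
end
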